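/- Every frame in an infinite-dimensional Hilbert space whose elements are all nonzero contains, for every ε > 0, a subsequence (x_{j_k}) such that the normalized vectors z_k = x_{j_k}/‖x_{j_k}‖ satisfy (1−ε)(∑_k |c_k|²)^{1/2} ≤ ‖∑_k c_k z_k‖ ≤ (1+ε)(∑_k |c_k|²)^{1/2} for all finitely supported scalars (c_k). -/

import Mathlib

/-!
Normalize the frame to unit vectors `z j = x j / ‖x j‖`. In infinite dimensions the lower frame
bound makes `∑ ‖x j‖²` diverge (a vector orthogonal to `x 0, …, x (M-1)` only sees the tail),
whereas `∑ ‖P_K x j‖²` converges for every finite-dimensional `K`. Hence arbitrarily far out there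
are `z j` almost orthogonal to any given finite-dimensional subspace, and `s` can be chosen
inductively so that `z (s k)` is `δ k`-almost orthogonal to the span of the earlier choices. Then
the Gram–Schmidt orthonormalization `e` of `z ∘ s` satisfies `‖z (s k) - e k‖ ≤ 2 δ k`, and a
perturbation of an orthonormal sequence of total size `ε` is `(1 ± ε)`-equivalent to it.
-/

open scoped RealInnerProductSpace

open Set Submodule InnerProductSpace

theorem exists_strictMono_forall_image_Iio {p : ℕ → Set ℕ → ℕ → Prop}
    (hp : ∀ k j, Antitone fun S => p k S j) (h : ∀ k N, ∃ j ≥ N, p k (Iio N) j) :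
    ∃ s : ℕ → ℕ, StrictMono s ∧ ∀ k, p k (s '' Iio k) (s k) := by
  choose g hg_ge hg using h
  let s : ℕ → ℕ := fun k => Nat.rec (g 0 0) (fun k j => g (k + 1) (j + 1)) k
  have hs_succ : ∀ k, s (k + 1) = g (k + 1) (s k + 1) := fun k => rfl
  have hs : StrictMono s := strictMono_nat_of_lt_succ fun k => by
    rw [hs_succ]
    exact hg_ge _ _
  refine ⟨s, hs, fun k => ?_⟩
  cases k with
  | zero => exact hp 0 (s 0) (by simp) (hg 0 0)
  | succ k =>
    rw [hs_succ]
    refine hp _ _ ?_ (hg (k + 1) (s k + 1))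
    rintro _ ⟨i, hi, rfl⟩
    exact Nat.lt_succ_of_le (hs.monotone (Nat.le_of_lt_succ hi))

theorem exists_ne_zero_mem_orthogonal {E : Type*} [NormedAddCommGroup E] [InnerProductSpace ℝ E]
    (hinf : ¬ FiniteDimensional ℝ E) (K : Submodule ℝ E) [FiniteDimensional ℝ K] :
    ∃ v ≠ 0, v ∈ Kᗮ := by
  have hK : K ≠ ⊤ := by
    rintro rfl
    exact hinf (topEquiv.finiteDimensional)
  obtain ⟨v, hv, hv0⟩ := exists_mem_ne_zero_of_ne_bot (mt orthogonal_eq_bot_iff.mp hK)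
  exact ⟨v, hv0, hv⟩

section LowerFrameBound

variable {H : Type*} [NormedAddCommGroup H] [InnerProductSpace ℝ H] {x : ℕ → H} {A : ℝ}

/-- A divergent series has `tsum` zero, so the lower frame bound alone already forces
summability. -/
theorem summable_inner_sq_of_lower_frame_bound (hA : 0 < A)
    (hlow : ∀ v : H, A * ‖v‖ ^ 2 ≤ ∑' j, ⟪v, x j⟫ ^ 2) (v : H) :
    Summable fun j => ⟪v, x j⟫ ^ 2 := by
  by_contra hs
  have hv : ‖v‖ ^ 2 ≤ 0 := by
    have := hlow v
    rw [tsum_eq_zero_of_not_summable hs] at this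
    exact nonpos_of_mul_nonpos_right this hA
  obtain rfl : v = 0 := by simpa using hv
  simp at hs

theorem not_summable_norm_sq_of_lower_frame_bound (hinf : ¬ FiniteDimensional ℝ H) (hA : 0 < A)
    (hlow : ∀ v : H, A * ‖v‖ ^ 2 ≤ ∑' j, ⟪v, x j⟫ ^ 2) :
    ¬ Summable fun j => ‖x j‖ ^ 2 := by
  intro hsum
  obtain ⟨M, hM⟩ : ∃ M, ∑' j, ‖x (j + M)‖ ^ 2 < A :=
    ((tendsto_sum_nat_add fun j => ‖x j‖ ^ 2).eventually (eventually_lt_nhds hA)).exists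
  have : FiniteDimensional ℝ (span ℝ (x '' Iio M)) :=
    FiniteDimensional.span_of_finite ℝ ((finite_Iio M).image x)
  obtain ⟨v, hv0, hv⟩ := exists_ne_zero_mem_orthogonal hinf (span ℝ (x '' Iio M))
  have hhead : ∀ j ∈ Finset.range M, ⟪v, x j⟫ ^ 2 = 0 := fun j hj => by
    have hxj : x j ∈ span ℝ (x '' Iio M) := subset_span (mem_image_of_mem x (by simpa using hj))
    rw [inner_left_of_mem_orthogonal hxj hv, sq, zero_mul]
  have hsv := summable_inner_sq_of_lower_frame_bound hA hlow v
  have hpos : 0 < ‖v‖ ^ 2 := by positivity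
  have : A * ‖v‖ ^ 2 < A * ‖v‖ ^ 2 := calc
    A * ‖v‖ ^ 2 ≤ ∑' j, ⟪v, x j⟫ ^ 2 := hlow v
    _ = ∑' j, ⟪v, x (j + M)⟫ ^ 2 := by
      rw [← hsv.sum_add_tsum_nat_add M, Finset.sum_eq_zero hhead, zero_add]
    _ ≤ ∑' j, ‖v‖ ^ 2 * ‖x (j + M)‖ ^ 2 := by
      refine ((summable_nat_add_iff M).mpr hsv).tsum_le_tsum (fun j => ?_)
        (((summable_nat_add_iff M).mpr hsum).mul_left _)
      rw [← mul_pow, ← sq_abs]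
      exact pow_le_pow_left₀ (abs_nonneg _) (abs_real_inner_le_norm _ _) 2
    _ = ‖v‖ ^ 2 * ∑' j, ‖x (j + M)‖ ^ 2 := tsum_mul_left
    _ < ‖v‖ ^ 2 * A := mul_lt_mul_of_pos_left hM hpos
    _ = A * ‖v‖ ^ 2 := mul_comm _ _
  exact lt_irrefl _ this

theorem summable_norm_sq_orthogonalProjectionOnto
    (hsum : ∀ v : H, Summable fun j => ⟪v, x j⟫ ^ 2) (K : Submodule ℝ H) [FiniteDimensional ℝ K] :
    Summable fun j => ‖K.orthogonalProjectionOnto (x j)‖ ^ 2 := by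
  let b := stdOrthonormalBasis ℝ K
  simp_rw [← b.sum_sq_inner_right, inner_orthogonalProjectionOnto_eq_of_mem_left]
  exact summable_sum fun i _ => hsum (b i)

theorem exists_ge_norm_orthogonalProjectionOnto_le (hinf : ¬ FiniteDimensional ℝ H) (hA : 0 < A)
    (hlow : ∀ v : H, A * ‖v‖ ^ 2 ≤ ∑' j, ⟪v, x j⟫ ^ 2) (K : Submodule ℝ H) [FiniteDimensional ℝ K]
    (N : ℕ) {η : ℝ} (hη : 0 < η) :
    ∃ j ≥ N, ‖K.orthogonalProjectionOnto (x j)‖ ≤ η * ‖x j‖ := by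
  by_contra! hbig
  have hproj := summable_norm_sq_orthogonalProjectionOnto
    (summable_inner_sq_of_lower_frame_bound hA hlow) K
  refine not_summable_norm_sq_of_lower_frame_bound hinf hA hlow ((summable_nat_add_iff N).mp ?_)
  refine Summable.of_nonneg_of_le (fun j => by positivity) (fun j => ?_)
    (((summable_nat_add_iff N).mpr hproj).mul_left (η ^ 2)⁻¹)
  rw [le_inv_mul_iff₀ (by positivity), ← mul_pow]
  exact pow_le_pow_left₀ (by positivity) (hbig (j + N) (Nat.le_add_left N j)).le 2

theorem exists_ge_forall_inner_inv_norm_smul_le (hinf : ¬ FiniteDimensional ℝ H) (hA : 0 < A)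
    (hlow : ∀ v : H, A * ‖v‖ ^ 2 ≤ ∑' j, ⟪v, x j⟫ ^ 2) (K : Submodule ℝ H) [FiniteDimensional ℝ K]
    (N : ℕ) {η : ℝ} (hη : 0 < η) :
    ∃ j ≥ N, ∀ v ∈ K, ⟪v, ‖x j‖⁻¹ • x j⟫ ≤ η * ‖v‖ := by
  obtain ⟨j, hjN, hj⟩ := exists_ge_norm_orthogonalProjectionOnto_le hinf hA hlow K N hη
  refine ⟨j, hjN, fun v hv => ?_⟩
  have hproj : ⟪v, x j⟫ ≤ ‖v‖ * ‖K.orthogonalProjectionOnto (x j)‖ := by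
    rw [← inner_orthogonalProjectionOnto_eq_of_mem_left ⟨v, hv⟩]
    exact real_inner_le_norm _ _
  rw [real_inner_smul_right]
  calc ‖x j‖⁻¹ * ⟪v, x j⟫ ≤ ‖x j‖⁻¹ * (‖v‖ * (η * ‖x j‖)) := by
        gcongr
        exact hproj.trans (by gcongr)
    _ = η * ‖v‖ * (‖x j‖⁻¹ * ‖x j‖) := by ring
    _ ≤ η * ‖v‖ := mul_le_of_le_one_right (by positivity) inv_mul_le_one

end LowerFrameBound

theorem norm_sub_inv_norm_smul_le {F : Type*} [NormedAddCommGroup F] [NormedSpace ℝ F] {u : F}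
    (hu : ‖u‖ = 1) (w : F) : ‖u - ‖w‖⁻¹ • w‖ ≤ 2 * ‖u - w‖ := by
  have hw : ‖w - ‖w‖⁻¹ • w‖ ≤ ‖u - w‖ := by
    rcases eq_or_ne w 0 with rfl | hw0
    · simp
    have hpos : 0 < ‖w‖ := norm_pos_iff.mpr hw0
    have hscalar : (1 - ‖w‖⁻¹) * ‖w‖ = ‖w‖ - 1 := by field_simp
    calc ‖w - ‖w‖⁻¹ • w‖ = ‖(1 - ‖w‖⁻¹) • w‖ := by rw [sub_smul, one_smul]
      _ = |‖w‖ - ‖u‖| := by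
          rw [hu, norm_smul, Real.norm_eq_abs, ← hscalar, abs_mul, abs_of_pos hpos]
      _ ≤ ‖u - w‖ := (abs_norm_sub_norm_le w u).trans_eq (norm_sub_rev w u)
  calc ‖u - ‖w‖⁻¹ • w‖ ≤ ‖u - w‖ + ‖w - ‖w‖⁻¹ • w‖ := norm_sub_le_norm_sub_add_norm_sub _ _ _
    _ ≤ 2 * ‖u - w‖ := by linarith

theorem Orthonormal.abs_norm_sum_smul_sub_sqrt_le {E : Type*} [NormedAddCommGroup E]
    [InnerProductSpace ℝ E] {ι : Type*} {e z : ι → E} (he : Orthonormal ℝ e) (s : Finset ι)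
    (c : ι → ℝ) {ε : ℝ} (hε : ∑ k ∈ s, ‖z k - e k‖ ≤ ε) :
    |‖∑ k ∈ s, c k • z k‖ - √(∑ k ∈ s, c k ^ 2)| ≤ ε * √(∑ k ∈ s, c k ^ 2) := by
  set R := √(∑ k ∈ s, c k ^ 2)
  have hnorm_e : ‖∑ k ∈ s, c k • e k‖ = R := by
    rw [norm_eq_sqrt_real_inner, he.inner_sum]
    simp only [conj_trivial, ← sq, R]
  have hc : ∀ k ∈ s, |c k| ≤ R := fun k hk =>
    Real.abs_le_sqrt (Finset.single_le_sum (fun i _ => sq_nonneg (c i)) hk)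
  calc |‖∑ k ∈ s, c k • z k‖ - R| ≤ ‖∑ k ∈ s, c k • z k - ∑ k ∈ s, c k • e k‖ := by
        rw [← hnorm_e]
        exact abs_norm_sub_norm_le _ _
    _ = ‖∑ k ∈ s, c k • (z k - e k)‖ := by simp only [← Finset.sum_sub_distrib, smul_sub]
    _ ≤ ∑ k ∈ s, |c k| * ‖z k - e k‖ :=
        (norm_sum_le _ _).trans_eq (by simp only [norm_smul, Real.norm_eq_abs])
    _ ≤ ∑ k ∈ s, R * ‖z k - e k‖ := Finset.sum_le_sum fun k hk => by gcongr; exact hc k hk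
    _ = (∑ k ∈ s, ‖z k - e k‖) * R := by rw [Finset.sum_mul]; simp only [mul_comm]
    _ ≤ ε * R := by gcongr

section GramSchmidt

variable {E : Type*} [NormedAddCommGroup E] [InnerProductSpace ℝ E]
  {ι : Type*} [LinearOrder ι] [LocallyFiniteOrderBot ι] [WellFoundedLT ι]

theorem sub_gramSchmidt_mem_span (f : ι → E) (k : ι) :
    f k - gramSchmidt ℝ f k ∈ span ℝ (f '' Iio k) := by
  rw [sub_eq_iff_eq_add'.mpr (gramSchmidt_def' ℝ f k), ← span_gramSchmidt_Iio ℝ f k]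
  refine sum_mem fun i hi => ?_
  have hle : (ℝ ∙ gramSchmidt ℝ f i) ≤ span ℝ (gramSchmidt ℝ f '' Iio k) :=
    span_mono (singleton_subset_iff.mpr (mem_image_of_mem _ (Finset.mem_Iio.mp hi)))
  exact hle (starProjection_apply_mem _ _)

theorem inner_gramSchmidt_eq_zero_of_mem_span (f : ι → E) {k : ι} {v : E}
    (hv : v ∈ span ℝ (f '' Iio k)) : ⟪v, gramSchmidt ℝ f k⟫ = 0 := by
  have hle : span ℝ (f '' Iio k) ≤ (ℝ ∙ gramSchmidt ℝ f k)ᗮ := span_le.mpr <| by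
    rintro _ ⟨i, hi, rfl⟩
    exact mem_orthogonal_singleton_iff_inner_right.mpr (gramSchmidt_inv_triangular ℝ f hi)
  exact mem_orthogonal_singleton_iff_inner_left.mp (hle hv)

theorem norm_sub_gramSchmidt_le (f : ι → E) {k : ι} {δ : ℝ} (hδ : 0 ≤ δ)
    (h : ∀ v ∈ span ℝ (f '' Iio k), ⟪v, f k⟫ ≤ δ * ‖v‖) :
    ‖f k - gramSchmidt ℝ f k‖ ≤ δ := by
  have hp := sub_gramSchmidt_mem_span f k
  have : ‖f k - gramSchmidt ℝ f k‖ ^ 2 ≤ δ * ‖f k - gramSchmidt ℝ f k‖ := calc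
    _ = ⟪f k - gramSchmidt ℝ f k, f k⟫ - ⟪f k - gramSchmidt ℝ f k, gramSchmidt ℝ f k⟫ := by
      rw [← inner_sub_right, real_inner_self_eq_norm_sq]
    _ = ⟪f k - gramSchmidt ℝ f k, f k⟫ := by
      rw [inner_gramSchmidt_eq_zero_of_mem_span f hp, sub_zero]
    _ ≤ δ * ‖f k - gramSchmidt ℝ f k‖ := h _ hp
  nlinarith [norm_nonneg (f k - gramSchmidt ℝ f k)]

theorem norm_sub_gramSchmidtNormed_le {f : ι → E} {k : ι} (hfk : ‖f k‖ = 1) {δ : ℝ} (hδ : 0 ≤ δ)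
    (h : ∀ v ∈ span ℝ (f '' Iio k), ⟪v, f k⟫ ≤ δ * ‖v‖) :
    ‖f k - gramSchmidtNormed ℝ f k‖ ≤ 2 * δ :=
  (norm_sub_inv_norm_smul_le hfk _).trans (by gcongr; exact norm_sub_gramSchmidt_le f hδ h)

theorem orthonormal_gramSchmidtNormed_of_norm_sub_lt_one {f : ι → E} (hf : ∀ k, ‖f k‖ = 1)
    (h : ∀ k, ‖f k - gramSchmidtNormed ℝ f k‖ < 1) : Orthonormal ℝ (gramSchmidtNormed ℝ f) := by
  have hne : ∀ k, gramSchmidtNormed ℝ f k ≠ 0 := fun k h0 => by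
    simpa [h0, hf k] using h k
  exact (gramSchmidtNormed_orthonormal' (𝕜 := ℝ) f).comp (fun k => ⟨k, hne k⟩)
    fun _ _ hkl => congrArg Subtype.val hkl

end GramSchmidt

theorem frame_subsequence_almost_orthonormal_general
    {H : Type*} [NormedAddCommGroup H] [InnerProductSpace ℝ H]
    (hinf : ¬ FiniteDimensional ℝ H)
    (x : ℕ → H) (A B : ℝ) (hA : 0 < A)
    (hframe : ∀ v : H,
      A * ‖v‖ ^ 2 ≤ ∑' j, ⟪v, x j⟫ ^ 2 ∧ ∑' j, ⟪v, x j⟫ ^ 2 ≤ B * ‖v‖ ^ 2)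
    (hx : ∀ j, x j ≠ 0) :
    ∀ ε : ℝ, 0 < ε → ∃ s : ℕ → ℕ, StrictMono s ∧ ∀ c : ℕ →₀ ℝ,
      (1 - ε) * Real.sqrt (∑ k ∈ c.support, c k ^ 2) ≤
          ‖∑ k ∈ c.support, c k • (‖x (s k)‖⁻¹ • x (s k))‖ ∧
      ‖∑ k ∈ c.support, c k • (‖x (s k)‖⁻¹ • x (s k))‖ ≤
          (1 + ε) * Real.sqrt (∑ k ∈ c.support, c k ^ 2) := by
  intro ε hε
  set z : ℕ → H := fun j => ‖x j‖⁻¹ • x j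
  have hz : ∀ j, ‖z j‖ = 1 := fun j => norm_smul_inv_norm (hx j)
  -- `η` sums to `min ε 1 ≤ ε`, and `η k < 1` keeps every Gram–Schmidt vector nonzero.
  set η : ℕ → ℝ := fun k => min ε 1 / 2 / 2 ^ k
  have hη_lt : ∀ k, η k < 1 := fun k => calc
    η k ≤ min ε 1 / 2 := div_le_self (by positivity) (one_le_pow₀ one_le_two)
    _ < 1 := by linarith [min_le_right ε 1]
  obtain ⟨s, hs, hsel⟩ := exists_strictMono_forall_image_Iio
    (p := fun k S j => ∀ v ∈ span ℝ (z '' S), ⟪v, z j⟫ ≤ η k / 2 * ‖v‖)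
    (fun k j S T hST hT v hv => hT v (span_mono (image_mono hST) hv))
    (fun k N =>
      have := FiniteDimensional.span_of_finite ℝ ((finite_Iio N).image z)
      exists_ge_forall_inner_inv_norm_smul_le hinf hA (fun v => (hframe v).1) _ N (by positivity))
  set e := gramSchmidtNormed ℝ (z ∘ s)
  have hclose : ∀ k, ‖z (s k) - e k‖ ≤ η k := fun k => by
    have := norm_sub_gramSchmidtNormed_le (f := z ∘ s) (δ := η k / 2) (hz (s k)) (by positivity)
      (fun v hv => hsel k v (by rwa [image_comp] at hv))
    rwa [mul_div_cancel₀ _ two_ne_zero] at this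
  have he : Orthonormal ℝ e := orthonormal_gramSchmidtNormed_of_norm_sub_lt_one
    (fun k => hz (s k)) fun k => (hclose k).trans_lt (hη_lt k)
  refine ⟨s, hs, fun c => ?_⟩
  have hsum : ∑ k ∈ c.support, ‖z (s k) - e k‖ ≤ ε := calc
    _ ≤ ∑ k ∈ c.support, η k := Finset.sum_le_sum fun k _ => hclose k
    _ ≤ ∑' k, η k := (summable_geometric_two' _).sum_le_tsum _ fun k _ => by positivity
    _ = min ε 1 := tsum_geometric_two' _
    _ ≤ ε := min_le_left _ _
  have := abs_le.mp (he.abs_norm_sum_smul_sub_sqrt_le c.support c hsum)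
  constructor <;> linarith

/-- Every frame (with nonzero elements) in an infinite-dimensional Hilbert space contains,
for each `ε > 0`, a subsequence whose normalizations `z k = x (s k) / ‖x (s k)‖` are
`(1-ε, 1+ε)`-equivalent to an orthonormal basis of `ℓ₂`. -/
theorem frame_subsequence_almost_orthonormal
    {H : Type*} [NormedAddCommGroup H] [InnerProductSpace ℝ H] [CompleteSpace H]
    (hinf : ¬ FiniteDimensional ℝ H)
    (x : ℕ → H) (A B : ℝ) (hA : 0 < A) (hAB : A ≤ B)
    (hframe : ∀ v : H,
      A * ‖v‖ ^ 2 ≤ ∑' j, ⟪v, x j⟫ ^ 2 ∧ ∑' j, ⟪v, x j⟫ ^ 2 ≤ B * ‖v‖ ^ 2)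
    (hx : ∀ j, x j ≠ 0) :
    ∀ ε : ℝ, 0 < ε → ∃ s : ℕ → ℕ, StrictMono s ∧ ∀ c : ℕ →₀ ℝ,
      (1 - ε) * Real.sqrt (∑ k ∈ c.support, c k ^ 2) ≤
          ‖∑ k ∈ c.support, c k • (‖x (s k)‖⁻¹ • x (s k))‖ ∧
      ‖∑ k ∈ c.support, c k • (‖x (s k)‖⁻¹ • x (s k))‖ ≤
          (1 + ε) * Real.sqrt (∑ k ∈ c.support, c k ^ 2) :=
  frame_subsequence_almost_orthonormal_general hinf x A B hA hframe hx
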